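/- arXiv:1811.03521 — 5 statements merged into one kernel-verified Lean document; each statement's English description precedes it below -/
import Mathlib

section
/- Let {a_k} be a nonincreasing sequence of real numbers converging to ā with a_k > ā for all k, let θ ∈ [0,1), and let {b_k} be nonnegative reals such that (a_k − ā)^θ ≤ cL·b_k and b_k² ≤ 2α(a_k − a_{k+1}) for constants c, L, α > 0. Then Σ_k b_k ≤ (2αcL/(1−θ))·(a₀ − ā)^{1−θ}, and in particular Σ_k b_k < ∞. -/
open Filter Topology

lemma kl_concave_step {x y p : ℝ} (hy : 0 < y) (hxy : y ≤ x) (hp0 : 0 ≤ p) (hp1 : p ≤ 1) :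
    p * (x - y) / x ^ (1 - p) ≤ x ^ p - y ^ p := by
  have hx : 0 < x := hy.trans_le hxy
  have hs : (-1 : ℝ) ≤ y / x - 1 := by
    have : 0 ≤ y / x := le_of_lt (div_pos hy hx)
    linarith
  have hB := rpow_one_add_le_one_add_mul_self hs hp0 hp1
  have he : (1:ℝ) + (y / x - 1) = y / x := by ring
  rw [he] at hB
  -- hB : (y / x) ^ p ≤ 1 + p * (y / x - 1)
  have hxp : (0:ℝ) < x ^ p := Real.rpow_pos_of_pos hx p
  have hdiv : (y / x) ^ p = y ^ p / x ^ p := Real.div_rpow hy.le hx.le p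
  rw [hdiv] at hB
  have h2 : y ^ p ≤ x ^ p * (1 + p * (y / x - 1)) := by
    calc y ^ p = x ^ p * (y ^ p / x ^ p) := by field_simp
    _ ≤ x ^ p * (1 + p * (y / x - 1)) := by
        exact mul_le_mul_of_nonneg_left hB hxp.le
  have hxpow : x ^ p / x = x ^ p * x⁻¹ := div_eq_mul_inv _ _
  have hkey : x ^ p * (p * (y / x - 1)) = -(p * (x - y) / x ^ (1 - p)) := by
    rw [Real.rpow_sub hx, Real.rpow_one]
    field_simp
    ring
  nlinarith [h2, hkey]

/-- Abstract Kurdyka–Łojasiewicz summability argument: if `a` is nonincreasing with limit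
`ā`, `a_k > ā`, `(a_k - ā)^θ ≤ cL b_k` and `b_k² ≤ 2α(a_k - a_{k+1})` with `b_k ≥ 0`,
`θ ∈ [0,1)`, `c, L, α > 0`, then `∑ b_k ≤ (2αcL/(1-θ)) (a₀ - ā)^{1-θ} < ∞`. -/
theorem kl_summability (a b : ℕ → ℝ) (abar : ℝ)
    (ha_anti : Antitone a) (ha_lim : Tendsto a atTop (𝓝 abar))
    (ha_gt : ∀ k, abar < a k)
    (θ : ℝ) (hθ0 : 0 ≤ θ) (hθ1 : θ < 1)
    (c L α : ℝ) (hc : 0 < c) (hL : 0 < L) (hα : 0 < α)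
    (hb_nonneg : ∀ k, 0 ≤ b k)
    (hKL : ∀ k, (a k - abar) ^ θ ≤ c * L * b k)
    (hdec : ∀ k, b k ^ 2 ≤ 2 * α * (a k - a (k + 1))) :
    Summable b ∧ (∑' k, b k) ≤ (2 * α * c * L / (1 - θ)) * (a 0 - abar) ^ (1 - θ) := by
  set C := 2 * α * c * L / (1 - θ) with hC
  set g : ℕ → ℝ := fun k => (a k - abar) ^ (1 - θ) with hg
  have hθ1' : (0:ℝ) < 1 - θ := by linarith
  have hCpos : 0 < C := by
    apply div_pos _ hθ1'
    positivity
  have hgpos : ∀ k, 0 < g k := fun k =>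
    Real.rpow_pos_of_pos (by linarith [ha_gt k]) _
  have hstep : ∀ k, b k ≤ C * (g k - g (k + 1)) := by
    intro k
    have hx : 0 < a k - abar := by linarith [ha_gt k]
    have hy : 0 < a (k + 1) - abar := by linarith [ha_gt (k + 1)]
    have hxy : a (k + 1) - abar ≤ a k - abar := by
      have := ha_anti (Nat.le_succ k); linarith
    have hxθ : (0:ℝ) < (a k - abar) ^ θ := Real.rpow_pos_of_pos hx θ
    -- b k * (a k - abar)^θ ≤ 2αcL (a k - a (k+1))
    have h1 : b k * (a k - abar) ^ θ ≤ 2 * α * c * L * (a k - a (k + 1)) := by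
      have h0 := mul_le_mul_of_nonneg_left (hKL k) (hb_nonneg k)
      have h1' := mul_le_mul_of_nonneg_left (hdec k) (by positivity : (0:ℝ) ≤ c * L)
      nlinarith [h0, h1']
    have h2 : b k ≤ 2 * α * c * L * ((a k - a (k + 1)) / (a k - abar) ^ θ) := by
      rw [← mul_div_assoc, le_div_iff₀ hxθ]
      linarith
    have hconc := kl_concave_step hy hxy (le_of_lt hθ1') (by linarith)
    rw [show (1 : ℝ) - (1 - θ) = θ by ring] at hconc
    have h3 : (a k - a (k + 1)) / (a k - abar) ^ θ ≤ (g k - g (k + 1)) / (1 - θ) := by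
      rw [le_div_iff₀ hθ1']
      have hrw : (a k - abar) - (a (k + 1) - abar) = a k - a (k + 1) := by ring
      rw [hrw] at hconc
      calc (a k - a (k + 1)) / (a k - abar) ^ θ * (1 - θ)
          = (1 - θ) * (a k - a (k + 1)) / (a k - abar) ^ θ := by ring
        _ ≤ (a k - abar) ^ (1 - θ) - (a (k + 1) - abar) ^ (1 - θ) := hconc
        _ = g k - g (k + 1) := rfl
    calc b k ≤ 2 * α * c * L * ((a k - a (k + 1)) / (a k - abar) ^ θ) := h2
      _ ≤ 2 * α * c * L * ((g k - g (k + 1)) / (1 - θ)) := by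
          apply mul_le_mul_of_nonneg_left h3 (by positivity)
      _ = C * (g k - g (k + 1)) := by rw [hC]; ring
  have hsum : ∀ n, ∑ i ∈ Finset.range n, b i ≤ C * g 0 := by
    intro n
    calc ∑ i ∈ Finset.range n, b i ≤ ∑ i ∈ Finset.range n, C * (g i - g (i + 1)) :=
          Finset.sum_le_sum fun i _ => hstep i
      _ = C * ∑ i ∈ Finset.range n, (g i - g (i + 1)) := by rw [Finset.mul_sum]
      _ = C * (g 0 - g n) := by rw [Finset.sum_range_sub' g n]
      _ ≤ C * g 0 := by nlinarith [hgpos n, hCpos]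
  have hSummable : Summable b := summable_of_sum_range_le hb_nonneg hsum
  exact ⟨hSummable, Real.tsum_le_of_sum_range_le hb_nonneg hsum⟩
end

section
/- With I, J as above and any finite α > 0, the unique maximizer over O ∈ 𝒪_{3,2} of tr(Oᵀ(−J + I + α^{-1}I)) is I, the unique maximizer of tr(Oᵀ(−I + I + α^{-1}J)) is J, and the unique maximizer of tr(Oᵀ(I + J + α^{-1}I)) is I; hence the point (I, J, I) is a fixed point of the proximal block relaxation update. -/
/-!
If `Q` has orthonormal columns and `B` is positive definite, then for every `O` with orthonormal
columns `tr((O - Q) B (O - Q)ᵀ) = 2 (tr B - tr(Oᵀ Q B))`, and the left side is positive unless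
`O = Q`. Hence `Q` is the unique maximizer of `O ↦ tr(Oᵀ (Q B))` on the Stiefel manifold, i.e. the
polar factor of `Q B`. Each of the three matrices of the proximal update factors in this way:
`(1 + α⁻¹) I - J = I (α⁻¹ + v vᵀ)` with `v = (1, -1)`, `α⁻¹ J = J (α⁻¹ 1)`, and
`(1 + α⁻¹) I + J = I (α⁻¹ + w wᵀ)` with `w = (1, 1)`.
-/

open Matrix

variable {m n : Type*} [Fintype m] [Fintype n]

def IsStiefelArgmax [DecidableEq n] (M O : Matrix m n ℝ) : Prop :=
  Oᵀ * O = 1 ∧ ∀ O' : Matrix m n ℝ, O'ᵀ * O' = 1 → trace (O'ᵀ * M) ≤ trace (Oᵀ * M)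

omit [Fintype m] in
lemma diag_mul_mul_transpose (X : Matrix m n ℝ) (B : Matrix n n ℝ) (i : m) :
    (X * B * Xᵀ) i i = X i ⬝ᵥ (B *ᵥ X i) := by
  rw [mul_apply, dotProduct_mulVec]
  simp [dotProduct, vecMul, mul_apply, mul_comm]

lemma Matrix.PosDef.trace_mul_mul_transpose_pos {B : Matrix n n ℝ} (hB : B.PosDef)
    {X : Matrix m n ℝ} (hX : X ≠ 0) : 0 < trace (X * B * Xᵀ) := by
  obtain ⟨i, hi⟩ : ∃ i, X i ≠ 0 := by
    by_contra! h
    exact hX (funext h)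
  simp only [trace, diag, diag_mul_mul_transpose]
  refine Finset.sum_pos' (fun j _ => ?_) ⟨i, Finset.mem_univ _, ?_⟩
  · simpa using hB.posSemidef.dotProduct_mulVec_nonneg (X j)
  · simpa using hB.dotProduct_mulVec_pos hi

lemma trace_sub_mul_mul_transpose_sub [DecidableEq n] {O Q : Matrix m n ℝ} {B : Matrix n n ℝ}
    (hO : Oᵀ * O = 1) (hQ : Qᵀ * Q = 1) (hB : Bᵀ = B) :
    trace ((O - Q) * B * (O - Q)ᵀ) = 2 * (trace B - trace (Oᵀ * (Q * B))) := by
  have hcross : trace (Qᵀ * O * B) = trace (Oᵀ * (Q * B)) := by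
    rw [← trace_transpose, transpose_mul, transpose_mul, transpose_transpose, hB,
      trace_mul_comm, Matrix.mul_assoc]
  rw [trace_mul_cycle, transpose_sub, Matrix.sub_mul, Matrix.mul_sub, Matrix.mul_sub, hO, hQ]
  simp only [Matrix.sub_mul, trace_sub, Matrix.one_mul, hcross, Matrix.mul_assoc Oᵀ]
  ring

theorem isStiefelArgmax_mul_posDef_iff [DecidableEq n] {O Q : Matrix m n ℝ} {B : Matrix n n ℝ}
    (hQ : Qᵀ * Q = 1) (hB : B.PosDef) : IsStiefelArgmax (Q * B) O ↔ O = Q := by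
  have hBt : Bᵀ = B := hB.isHermitian
  have htrQ : trace (Qᵀ * (Q * B)) = trace B := by rw [← Matrix.mul_assoc, hQ, Matrix.one_mul]
  constructor
  · rintro ⟨hO, hmax⟩
    by_contra hne
    have hpos := hB.trace_mul_mul_transpose_pos (sub_ne_zero.mpr hne)
    rw [trace_sub_mul_mul_transpose_sub hO hQ hBt] at hpos
    linarith [hmax Q hQ]
  · rintro rfl
    refine ⟨hQ, fun O' hO' => ?_⟩
    have hnonneg := (hB.posSemidef.mul_mul_conjTranspose_same (O' - O)).trace_nonneg
    rw [conjTranspose_eq_transpose_of_trivial, trace_sub_mul_mul_transpose_sub hO' hQ hBt]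
      at hnonneg
    linarith

lemma posDef_smul_one_add_vecMulVec [DecidableEq n] {a : ℝ} (ha : 0 < a) (v : n → ℝ) :
    (a • 1 + vecMulVec v v).PosDef := by
  simpa using (PosDef.one.smul ha).add_posSemidef (posSemidef_vecMulVec_self_star v)

/-- With `I, J` as in the example and any finite `α > 0`: the unique maximizer over
`𝒪_{3,2}` of `tr(Oᵀ(-J + I + α⁻¹ I))` is `I`, of `tr(Oᵀ(-I + I + α⁻¹ J))` is `J`, and of
`tr(Oᵀ(I + J + α⁻¹ I))` is `I`; hence `(I, J, I)` is a fixed point of the proximal block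
relaxation update. -/
theorem proximal_update_fixed_point (α : ℝ) (hα : 0 < α) :
    letI I : Matrix (Fin 3) (Fin 2) ℝ := !![1, 0; 0, 1; 0, 0]
    letI J : Matrix (Fin 3) (Fin 2) ℝ := !![0, 1; 1, 0; 0, 0]
    (∀ O : Matrix (Fin 3) (Fin 2) ℝ,
      (Oᵀ * O = 1 ∧
        ∀ O' : Matrix (Fin 3) (Fin 2) ℝ, O'ᵀ * O' = 1 →
          Matrix.trace (O'ᵀ * (-J + I + α⁻¹ • I)) ≤ Matrix.trace (Oᵀ * (-J + I + α⁻¹ • I)))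
      ↔ O = I) ∧
    (∀ O : Matrix (Fin 3) (Fin 2) ℝ,
      (Oᵀ * O = 1 ∧
        ∀ O' : Matrix (Fin 3) (Fin 2) ℝ, O'ᵀ * O' = 1 →
          Matrix.trace (O'ᵀ * (-I + I + α⁻¹ • J)) ≤ Matrix.trace (Oᵀ * (-I + I + α⁻¹ • J)))
      ↔ O = J) ∧
    (∀ O : Matrix (Fin 3) (Fin 2) ℝ,
      (Oᵀ * O = 1 ∧
        ∀ O' : Matrix (Fin 3) (Fin 2) ℝ, O'ᵀ * O' = 1 →
          Matrix.trace (O'ᵀ * (I + J + α⁻¹ • I)) ≤ Matrix.trace (Oᵀ * (I + J + α⁻¹ • I)))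
      ↔ O = I) := by
  set I : Matrix (Fin 3) (Fin 2) ℝ := !![1, 0; 0, 1; 0, 0]
  set J : Matrix (Fin 3) (Fin 2) ℝ := !![0, 1; 1, 0; 0, 0]
  have hI : Iᵀ * I = 1 := by
    ext i j; fin_cases i <;> fin_cases j <;> simp [I, mul_apply, Fin.sum_univ_three]
  have hJ : Jᵀ * J = 1 := by
    ext i j; fin_cases i <;> fin_cases j <;> simp [J, mul_apply, Fin.sum_univ_three]
  have ha : 0 < α⁻¹ := inv_pos.mpr hα
  have h₁ : -J + I + α⁻¹ • I =
      I * (α⁻¹ • 1 + vecMulVec ![1, -1] ![1, -1] : Matrix (Fin 2) (Fin 2) ℝ) := by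
    ext i j
    fin_cases i <;> fin_cases j <;>
      simp [I, J, mul_apply, Fin.sum_univ_two, vecMulVec, one_apply, add_comm]
  have h₂ : -I + I + α⁻¹ • J = J * (α⁻¹ • 1 : Matrix (Fin 2) (Fin 2) ℝ) := by simp
  have h₃ : I + J + α⁻¹ • I =
      I * (α⁻¹ • 1 + vecMulVec ![1, 1] ![1, 1] : Matrix (Fin 2) (Fin 2) ℝ) := by
    ext i j
    fin_cases i <;> fin_cases j <;>
      simp [I, J, mul_apply, Fin.sum_univ_two, vecMulVec, one_apply, add_comm]
  refine ⟨fun O => ?_, fun O => ?_, fun O => ?_⟩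
  · rw [h₁]
    exact isStiefelArgmax_mul_posDef_iff hI (posDef_smul_one_add_vecMulVec ha _)
  · rw [h₂]
    exact isStiefelArgmax_mul_posDef_iff hJ (PosDef.one.smul ha)
  · rw [h₃]
    exact isStiefelArgmax_mul_posDef_iff hI (posDef_smul_one_add_vecMulVec ha _)
end

section
/- Let f: X₁ × ⋯ × X_m → ℝ be continuous, where each Xᵢ is a compact metric space. Define the set-valued map M sending Θ = (Θ₁,…,Θ_m) to the set of O = (O₁,…,O_m) obtained by the cyclic updates Oᵢ ∈ argmax_{X ∈ Xᵢ} f(O₁,…,O_{i−1}, X, Θ_{i+1},…,Θ_m). Then M is a closed map: if Θ^k → Θ, O^k → O, and O^k ∈ M(Θ^k) for all k, then O ∈ M(Θ). -/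
open Filter Topology

variable {m : ℕ} {X : Fin m → Type*}

/-- The hybrid point used in the cyclic update: coordinates `j ≤ i` come from `O`
(already updated), coordinates `j > i` come from `Θ` (not yet updated). -/
def hybrid (O Θ : ∀ j, X j) (i : Fin m) : ∀ j, X j :=
  fun j => if (j : ℕ) ≤ (i : ℕ) then O j else Θ j

/-- `O ∈ M(Θ)`: each block `Oᵢ` maximizes `f` in its coordinate, with blocks `j < i`
already set to `O j` and blocks `j > i` still at `Θ j`. -/
def InCyclicUpdate (f : (∀ j, X j) → ℝ) (Θ O : ∀ j, X j) : Prop :=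
  ∀ i : Fin m, ∀ Y : X i,
    f (Function.update (hybrid O Θ i) i Y) ≤ f (hybrid O Θ i)

/-!
Each defining inequality of `M` compares `f` at two points that depend continuously on `(Θ, O)`,
so it cuts out a closed set, and the graph of `M` is their intersection.
-/

section Topology

variable [∀ i, TopologicalSpace (X i)]

theorem continuous_hybrid (i : Fin m) :
    Continuous fun p : (∀ j, X j) × (∀ j, X j) => hybrid p.2 p.1 i :=
  continuous_pi fun j => by
    unfold hybrid
    split_ifs
    exacts [(continuous_apply j).comp continuous_snd, (continuous_apply j).comp continuous_fst]

theorem isClosed_setOf_inCyclicUpdate {f : (∀ j, X j) → ℝ} (hf : Continuous f) :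
    IsClosed {p : (∀ j, X j) × (∀ j, X j) | InCyclicUpdate f p.1 p.2} := by
  simp only [InCyclicUpdate, Set.ofPred_forall]
  exact isClosed_iInter fun i => isClosed_iInter fun Y =>
    isClosed_le (hf.comp ((continuous_hybrid i).update i continuous_const))
      (hf.comp (continuous_hybrid i))

end Topology

theorem cyclic_update_map_closed_general
    [∀ i, MetricSpace (X i)]
    (f : (∀ j, X j) → ℝ) (hf : Continuous f)
    (Θseq Oseq : ℕ → ∀ j, X j) (Θ O : ∀ j, X j)
    (hΘ : Tendsto Θseq atTop (𝓝 Θ)) (hO : Tendsto Oseq atTop (𝓝 O))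
    (hmem : ∀ k, InCyclicUpdate f (Θseq k) (Oseq k)) :
    InCyclicUpdate f Θ O :=
  (isClosed_setOf_inCyclicUpdate hf).mem_of_tendsto (hΘ.prodMk_nhds hO) (.of_forall hmem)

/-- The set-valued cyclic block-maximization map `M` is closed: if `Θ^k → Θ`, `O^k → O`,
and `O^k ∈ M(Θ^k)` for all `k`, then `O ∈ M(Θ)`. -/
theorem cyclic_update_map_closed
    [∀ i, MetricSpace (X i)] [∀ i, CompactSpace (X i)]
    (f : (∀ j, X j) → ℝ) (hf : Continuous f)
    (Θseq Oseq : ℕ → ∀ j, X j) (Θ O : ∀ j, X j)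
    (hΘ : Tendsto Θseq atTop (𝓝 Θ)) (hO : Tendsto Oseq atTop (𝓝 O))
    (hmem : ∀ k, InCyclicUpdate f (Θseq k) (Oseq k)) :
    InCyclicUpdate f Θ O :=
  cyclic_update_map_closed_general f hf Θseq Oseq Θ O hΘ hO hmem
end

section
/- Suppose a sequence {x^k} in ℝⁿ is bounded and satisfies ‖x^{k+1} − x^k‖ → 0. Then the set W of limit points of {x^k} is nonempty, compact, and connected (Ostrowski's theorem). -/
/-!
The limit points of `x` are its cluster points, which form a closed subset of the compact set
`closure (range x)`. If they split into two disjoint closed parts `A` and `B`, these have disjoint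
`δ`-thickenings. Eventually `x` stays in the `δ/2`-thickening of `A ∪ B` and moves by less than
`δ/2` per step, so it can never pass between the two `δ/2`-thickenings: it eventually stays near
one part, and the other contains no cluster point.
-/

open Filter Topology Metric Set

theorem Filter.eventually_or_eventually_not_of_eventually_succ_iff {P : ℕ → Prop}
    (h : ∀ᶠ k in atTop, P (k + 1) ↔ P k) :
    (∀ᶠ k in atTop, P k) ∨ ∀ᶠ k in atTop, ¬ P k := by
  obtain ⟨N, hN⟩ := eventually_atTop.1 h
  have hconst : ∀ k ≥ N, P k ↔ P N :=
    fun k hk => Nat.le_induction Iff.rfl (fun j hj ih => (hN j hj).trans ih) k hk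
  by_cases hP : P N
  · exact .inl (eventually_atTop.2 ⟨N, fun k hk => (hconst k hk).2 hP⟩)
  · exact .inr (eventually_atTop.2 ⟨N, fun k hk => mt (hconst k hk).1 hP⟩)

theorem setOf_exists_strictMono_tendsto_eq_setOf_mapClusterPt {X : Type*} [TopologicalSpace X]
    [FirstCountableTopology X] (x : ℕ → X) :
    {y | ∃ φ : ℕ → ℕ, StrictMono φ ∧ Tendsto (x ∘ φ) atTop (𝓝 y)} =
      {y | MapClusterPt y atTop x} := by
  ext y
  constructor
  · rintro ⟨φ, hφ, hlim⟩
    exact hlim.mapClusterPt.of_comp hφ.tendsto_atTop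
  · exact MapClusterPt.tendsto_subseq

section ClusterPoints

variable {ι X : Type*} [TopologicalSpace X] {f : Filter ι} {u : ι → X}

theorem isCompact_setOf_mapClusterPt [T2Space X] {K : Set X} (hK : IsCompact K)
    (hu : ∀ᶠ i in f, u i ∈ K) : IsCompact {y | MapClusterPt y f u} :=
  hK.of_isClosed_subset isClosed_setOfPred_clusterPt
    fun _ hy => hK.isClosed.mem_of_mapClusterPt hy hu

theorem MapClusterPt.notMem_of_eventually_mem_of_disjoint {y : X} {s t : Set X}
    (hy : MapClusterPt y f u) (hs : ∀ᶠ i in f, u i ∈ s) (ht : IsOpen t) (hst : Disjoint s t) :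
    y ∉ t := fun hyt =>
  let ⟨_, hti, hsi⟩ := ((hy.frequently (ht.mem_nhds hyt)).and_eventually hs).exists
  hst.notMem_of_mem_left hsi hti

end ClusterPoints

theorem eventually_mem_or_eventually_mem_of_tendsto_dist_succ {α : Type*} [PseudoMetricSpace α]
    {x : ℕ → α} (hx : Tendsto (fun k => dist (x (k + 1)) (x k)) atTop (𝓝 0)) {U V : Set α}
    {δ : ℝ} (hδ : 0 < δ) (hUV : Disjoint (thickening δ U) V) (hmem : ∀ᶠ k in atTop, x k ∈ U ∪ V) :
    (∀ᶠ k in atTop, x k ∈ U) ∨ ∀ᶠ k in atTop, x k ∈ V := by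
  have hstep : ∀ᶠ k in atTop, dist (x (k + 1)) (x k) < δ := hx.eventually (gt_mem_nhds hδ)
  have hinv : ∀ᶠ k in atTop, x (k + 1) ∈ U ↔ x k ∈ U := by
    filter_upwards [hstep, hmem, tendsto_add_atTop_nat 1 |>.eventually hmem]
      with k hdist hk hk1
    constructor
    · intro hU
      refine hk.resolve_right fun hV => hUV.notMem_of_mem_left ?_ hV
      exact mem_thickening_iff.2 ⟨_, hU, hdist.trans_eq' (dist_comm _ _)⟩
    · intro hU
      refine hk1.resolve_right fun hV => hUV.notMem_of_mem_left ?_ hV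
      exact mem_thickening_iff.2 ⟨_, hU, hdist⟩
  refine (eventually_or_eventually_not_of_eventually_succ_iff hinv).imp_right fun hnot => ?_
  filter_upwards [hnot, hmem] with k hU hk using hk.resolve_left hU

theorem isPreconnected_setOf_mapClusterPt_of_tendsto_dist_succ {α : Type*} [MetricSpace α]
    {x : ℕ → α} {K : Set α} (hK : IsCompact K)
    (hxK : ∀ᶠ k in atTop, x k ∈ K)
    (hx : Tendsto (fun k => dist (x (k + 1)) (x k)) atTop (𝓝 0)) :
    IsPreconnected {y | MapClusterPt y atTop x} := by
  set W := {y | MapClusterPt y atTop x}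
  have hW : IsCompact W := isCompact_setOf_mapClusterPt hK hxK
  rw [isPreconnected_iff_subset_of_fully_disjoint_closed hW.isClosed]
  intro u v hu hv hWuv huv
  obtain ⟨δ, hδ, hAB⟩ := (huv.mono inter_subset_right inter_subset_right).exists_thickenings
    (hW.inter_right hu) (hW.inter_right hv).isClosed
  set A := thickening (δ / 2) (W ∩ u)
  set B := thickening (δ / 2) (W ∩ v)
  have hδ2 : 0 < δ / 2 := half_pos hδ
  have hdisj : Disjoint A B :=
    hAB.mono (thickening_mono (half_le_self hδ.le) _) (thickening_mono (half_le_self hδ.le) _)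
  have hsep : Disjoint (thickening (δ / 2) A) B := by
    refine hAB.mono ((thickening_thickening_subset _ _ _).trans ?_)
      (thickening_mono (half_le_self hδ.le) _)
    rw [add_halves]
  have hnear : ∀ᶠ k in atTop, x k ∈ A ∪ B := by
    refine hK.tendsto_nhdsSet_of_mapClusterPt hxK (fun y _ hy => hy)
      ((isOpen_thickening.union isOpen_thickening).mem_nhdsSet.2 fun y hy => ?_)
    rcases hWuv hy with hyu | hyv
    · exact .inl (self_subset_thickening hδ2 _ ⟨hy, hyu⟩)
    · exact .inr (self_subset_thickening hδ2 _ ⟨hy, hyv⟩)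
  rcases eventually_mem_or_eventually_mem_of_tendsto_dist_succ hx hδ2 hsep hnear with hA | hB
  · refine .inl fun y hy => (hWuv hy).resolve_right fun hyv => ?_
    exact hy.notMem_of_eventually_mem_of_disjoint hA isOpen_thickening hdisj
      (self_subset_thickening hδ2 _ ⟨hy, hyv⟩)
  · refine .inr fun y hy => (hWuv hy).resolve_left fun hyu => ?_
    exact hy.notMem_of_eventually_mem_of_disjoint hB isOpen_thickening hdisj.symm
      (self_subset_thickening hδ2 _ ⟨hy, hyu⟩)

/-- Ostrowski's theorem: if a bounded sequence in `ℝⁿ` satisfies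
`‖x^{k+1} - x^k‖ → 0`, then its set of (subsequential) limit points is nonempty,
compact, and connected. -/
theorem ostrowski_limit_points {n : ℕ} (x : ℕ → EuclideanSpace ℝ (Fin n))
    (hbdd : Bornology.IsBounded (Set.range x))
    (hdiff : Tendsto (fun k => ‖x (k + 1) - x k‖) atTop (𝓝 0)) :
    letI W : Set (EuclideanSpace ℝ (Fin n)) :=
      {y | ∃ φ : ℕ → ℕ, StrictMono φ ∧ Tendsto (x ∘ φ) atTop (𝓝 y)}
    W.Nonempty ∧ IsCompact W ∧ IsConnected W := by
  simp only [setOf_exists_strictMono_tendsto_eq_setOf_mapClusterPt]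
  have hK : IsCompact (closure (range x)) := hbdd.isCompact_closure
  have hxK : ∀ᶠ k in atTop, x k ∈ closure (range x) :=
    Eventually.of_forall fun k => subset_closure (mem_range_self k)
  have hne : {y | MapClusterPt y atTop x}.Nonempty :=
    let ⟨y, _, hy⟩ := hK.exists_mapClusterPt_of_frequently hxK.frequently
    ⟨y, hy⟩
  have hsteps : Tendsto (fun k => dist (x (k + 1)) (x k)) atTop (𝓝 0) := by
    simpa only [dist_eq_norm] using hdiff
  exact ⟨hne, isCompact_setOf_mapClusterPt hK hxK,
    hne, isPreconnected_setOf_mapClusterPt_of_tendsto_dist_succ hK hxK hsteps⟩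
end

section
/- Suppose a sequence {x^k} in ℝⁿ converges to x⋆, ψ(x^k) is nonincreasing with limit ψ̄ = ψ(x⋆), the inequalities ψ(x^k) − ψ(x^{k+1}) ≥ (1/(2α))‖x^{k+1} − x^k‖² and |ψ(x^k) − ψ̄|^θ ≤ cL‖x^{k+1} − x^k‖ hold for all k with constants α, c, L > 0 and θ ∈ [0,1), and ψ(x^k) > ψ̄ for all k. Then Σ_{k=0}^∞ ‖x^{k+1} − x^k‖ ≤ (2αcL/(1−θ))(ψ(x⁰) − ψ̄)^{1−θ}. -/
open Filter Topology

/-! Each step the KL inequality turns the sufficient decrease `‖x^{k+1} - x^k‖² ≲ Δ_k - Δ_{k+1}`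
of the gap `Δ_k = ψ(x^k) - ψ̄` into `‖x^{k+1} - x^k‖ ≲ Δ_k^{-θ} (Δ_k - Δ_{k+1})`, and concavity
of `t ↦ t^{1-θ}` bounds the right-hand side by `(Δ_k^{1-θ} - Δ_{k+1}^{1-θ}) / (1 - θ)`.
The step lengths are therefore dominated by a telescoping sequence. -/

lemma rpow_le_rpow_add_mul_sub {a b p : ℝ} (ha : 0 < a) (hb : 0 ≤ b) (hp0 : 0 ≤ p)
    (hp1 : p ≤ 1) :
    b ^ p ≤ a ^ p + p * a ^ (p - 1) * (b - a) := by
  have hamgm : b ^ p * a ^ (1 - p) ≤ p * b + (1 - p) * a :=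
    Real.geom_mean_le_arith_mean2_weighted hp0 (by linarith) hb ha.le (by ring)
  have hinv : a ^ (1 - p) * a ^ (p - 1) = 1 := by
    rw [← Real.rpow_add ha, show 1 - p + (p - 1) = 0 by ring, Real.rpow_zero]
  have hpow : a * a ^ (p - 1) = a ^ p := by
    rw [Real.rpow_sub_one ha.ne', mul_div_cancel₀ _ ha.ne']
  calc b ^ p = b ^ p * a ^ (1 - p) * a ^ (p - 1) := by rw [mul_assoc, hinv, mul_one]
    _ ≤ (p * b + (1 - p) * a) * a ^ (p - 1) :=
        mul_le_mul_of_nonneg_right hamgm (Real.rpow_nonneg ha.le _)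
    _ = a ^ p + p * a ^ (p - 1) * (b - a) := by rw [← hpow]; ring

lemma le_mul_rpow_sub_rpow_of_sq_le_of_rpow_le {d Δ₀ Δ₁ a b θ : ℝ} (hd : 0 ≤ d)
    (hΔ₀ : 0 < Δ₀) (hΔ₁ : 0 ≤ Δ₁) (ha : 0 ≤ a) (hb : 0 ≤ b) (hθ0 : 0 ≤ θ) (hθ1 : θ < 1)
    (hdec : d ^ 2 ≤ a * (Δ₀ - Δ₁)) (hKL : Δ₀ ^ θ ≤ b * d) :
    d ≤ a * b / (1 - θ) * (Δ₀ ^ (1 - θ) - Δ₁ ^ (1 - θ)) := by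
  have hθpos : 0 < Δ₀ ^ θ := Real.rpow_pos_of_pos hΔ₀ θ
  have hgap : d * Δ₀ ^ θ ≤ a * b * (Δ₀ - Δ₁) :=
    calc d * Δ₀ ^ θ ≤ d * (b * d) := mul_le_mul_of_nonneg_left hKL hd
      _ = b * d ^ 2 := by ring
      _ ≤ b * (a * (Δ₀ - Δ₁)) := mul_le_mul_of_nonneg_left hdec hb
      _ = a * b * (Δ₀ - Δ₁) := by ring
  have hconc : (1 - θ) * (Δ₀ - Δ₁) * Δ₀ ^ (-θ) ≤ Δ₀ ^ (1 - θ) - Δ₁ ^ (1 - θ) := by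
    have := rpow_le_rpow_add_mul_sub hΔ₀ hΔ₁ (by linarith : 0 ≤ 1 - θ) (by linarith)
    rw [show 1 - θ - 1 = -θ by ring] at this
    linarith
  calc d = d * Δ₀ ^ θ * Δ₀ ^ (-θ) := by
        rw [Real.rpow_neg hΔ₀.le, mul_assoc, mul_inv_cancel₀ hθpos.ne', mul_one]
    _ ≤ a * b * (Δ₀ - Δ₁) * Δ₀ ^ (-θ) :=
        mul_le_mul_of_nonneg_right hgap (Real.rpow_nonneg hΔ₀.le _)
    _ = a * b / (1 - θ) * ((1 - θ) * (Δ₀ - Δ₁) * Δ₀ ^ (-θ)) := by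
        field_simp [(by linarith : (1 - θ) ≠ 0)]
    _ ≤ a * b / (1 - θ) * (Δ₀ ^ (1 - θ) - Δ₁ ^ (1 - θ)) :=
        mul_le_mul_of_nonneg_left hconc (div_nonneg (mul_nonneg ha hb) (by linarith))

lemma summable_and_tsum_le_of_le_sub_succ {d v : ℕ → ℝ} (hd : ∀ k, 0 ≤ d k) (hv : ∀ k, 0 ≤ v k)
    (hdv : ∀ k, d k ≤ v k - v (k + 1)) :
    Summable d ∧ ∑' k, d k ≤ v 0 := by
  have hpartial : ∀ N, ∑ k ∈ Finset.range N, d k ≤ v 0 := fun N =>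
    calc ∑ k ∈ Finset.range N, d k ≤ ∑ k ∈ Finset.range N, (v k - v (k + 1)) :=
          Finset.sum_le_sum fun k _ => hdv k
      _ = v 0 - v N := Finset.sum_range_sub' v N
      _ ≤ v 0 := sub_le_self _ (hv N)
  have hsum : Summable d := summable_of_sum_range_le hd hpartial
  exact ⟨hsum, hsum.tsum_le_of_sum_range_le hpartial⟩

theorem finite_length_of_kl_general {n : ℕ}
    (ψ : EuclideanSpace ℝ (Fin n) → ℝ)
    (x : ℕ → EuclideanSpace ℝ (Fin n)) (xstar : EuclideanSpace ℝ (Fin n))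
    (α c L θ : ℝ) (hα : 0 < α) (hc : 0 < c) (hL : 0 < L)
    (hθ0 : 0 ≤ θ) (hθ1 : θ < 1)
    (hdec : ∀ k, (1 / (2 * α)) * ‖x (k + 1) - x k‖ ^ 2 ≤ ψ (x k) - ψ (x (k + 1)))
    (hKL : ∀ k, |ψ (x k) - ψ xstar| ^ θ ≤ c * L * ‖x (k + 1) - x k‖)
    (hgt : ∀ k, ψ xstar < ψ (x k)) :
    Summable (fun k => ‖x (k + 1) - x k‖) ∧
    (∑' k : ℕ, ‖x (k + 1) - x k‖) ≤
      (2 * α * c * L / (1 - θ)) * (ψ (x 0) - ψ xstar) ^ (1 - θ) := by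
  set Δ : ℕ → ℝ := fun k => ψ (x k) - ψ xstar
  have hΔ : ∀ k, 0 < Δ k := fun k => sub_pos.2 (hgt k)
  have hstep : ∀ k, ‖x (k + 1) - x k‖ ≤
      2 * α * c * L / (1 - θ) * (Δ k ^ (1 - θ) - Δ (k + 1) ^ (1 - θ)) := fun k => by
    rw [mul_assoc (2 * α)]
    refine le_mul_rpow_sub_rpow_of_sq_le_of_rpow_le (norm_nonneg _) (hΔ k) (hΔ (k + 1)).le
      (by positivity) (by positivity) hθ0 hθ1 ?_ ?_
    · have := hdec k
      rw [one_div_mul_eq_div, div_le_iff₀ (by positivity)] at this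
      linarith
    · simpa only [abs_of_pos (sub_pos.2 (hgt k))] using hKL k
  have hC : 0 ≤ 2 * α * c * L / (1 - θ) := div_nonneg (by positivity) (by linarith)
  exact summable_and_tsum_le_of_le_sub_succ (fun k => norm_nonneg _)
    (fun k => mul_nonneg hC (Real.rpow_nonneg (hΔ k).le _))
    (fun k => (hstep k).trans_eq (mul_sub _ _ _))

/-- Finite length of the iterate trajectory under the KL inequality: if `x^k → x⋆`,
`ψ(x^k)` is nonincreasing with limit `ψ̄ = ψ(x⋆)`, the sufficient-decrease and KL bounds
hold, and `ψ(x^k) > ψ̄` for all `k`, then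
`∑ ‖x^{k+1} - x^k‖ ≤ (2αcL/(1-θ))(ψ(x⁰) - ψ̄)^{1-θ}`. -/
theorem finite_length_of_kl {n : ℕ}
    (ψ : EuclideanSpace ℝ (Fin n) → ℝ)
    (x : ℕ → EuclideanSpace ℝ (Fin n)) (xstar : EuclideanSpace ℝ (Fin n))
    (hx : Tendsto x atTop (𝓝 xstar))
    (hmono : Antitone (fun k => ψ (x k)))
    (hlim : Tendsto (fun k => ψ (x k)) atTop (𝓝 (ψ xstar)))
    (α c L θ : ℝ) (hα : 0 < α) (hc : 0 < c) (hL : 0 < L)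
    (hθ0 : 0 ≤ θ) (hθ1 : θ < 1)
    (hdec : ∀ k, (1 / (2 * α)) * ‖x (k + 1) - x k‖ ^ 2 ≤ ψ (x k) - ψ (x (k + 1)))
    (hKL : ∀ k, |ψ (x k) - ψ xstar| ^ θ ≤ c * L * ‖x (k + 1) - x k‖)
    (hgt : ∀ k, ψ xstar < ψ (x k)) :
    Summable (fun k => ‖x (k + 1) - x k‖) ∧
    (∑' k : ℕ, ‖x (k + 1) - x k‖) ≤
      (2 * α * c * L / (1 - θ)) * (ψ (x 0) - ψ xstar) ^ (1 - θ) :=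
  finite_length_of_kl_general ψ x xstar α c L θ hα hc hL hθ0 hθ1 hdec hKL hgt
end
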